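/- (Inequality (3.1), algebraic form.) Let β > 0. Suppose Q̊(ψ) ≤ −β ‖ψ‖² for every traceless symmetric bilinear form ψ on E, and Ric(X,X) ≤ −(n−1) β ‖X‖² for every X ∈ E. Then for every p ≥ 2 and every totally traceless symmetric p-multilinear map φ : E^p → ℝ, the Weitzenböck quadratic form satisfies Q_p(φ) ≤ −p(n+p−2) β ‖φ‖² ≤ 0, and Q_p(φ) = 0 only if φ = 0. -/

import Mathlib

open scoped RealInnerProductSpace

/-!
Freezing all but the first two slots of `φ` at basis vectors `w` gives symmetric traceless
bilinear forms `ψ_w = φ(·, ·, w)`. By the antisymmetry of `R` in its first two slots, the curvature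
term of `Q_p(φ)` is `-∑_w Q̊(ψ_w) ≥ β ‖φ‖²`, while its Ricci term is `∑_w Ric` evaluated on the
vectors with coordinates `φ(e_i, w)`, hence at most `-(n-1) β ‖φ‖²`. Together
`Q_p(φ) ≤ -p(n-1)β‖φ‖² - p(p-1)β‖φ‖² = -p(n+p-2)β‖φ‖²`, and the constant is negative, so
`Q_p(φ) = 0` forces every coordinate of `φ` to vanish.
-/

/-- The Weitzenböck quadratic form `Q_p` on symmetric `p`-multilinear maps (with
`p = p' + 2 ≥ 2`):
`Q_p(φ) = p Σ Ric(e_i,e_j) φ(e_i,e_{k₂},…) φ(e_j,e_{k₂},…)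
  − p(p−1) Σ R(e_i,e_j,e_k,e_l) φ(e_i,e_k,e_{k₃},…) φ(e_j,e_l,e_{k₃},…)`,
where `Ric(X,Y) = Σ_m R(e_m,X,e_m,Y)`. -/
noncomputable def weitzenbockQ
    {E : Type*} [NormedAddCommGroup E] [InnerProductSpace ℝ E]
    {n : ℕ} (e : OrthonormalBasis (Fin n) ℝ E)
    (R : E →ₗ[ℝ] E →ₗ[ℝ] E →ₗ[ℝ] E →ₗ[ℝ] ℝ)
    (p : ℕ) (φ : MultilinearMap ℝ (fun _ : Fin (p + 2) => E) ℝ) : ℝ :=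
  ((p : ℝ) + 2) *
      (∑ i, ∑ j, ∑ ks : Fin (p + 1) → Fin n,
        (∑ m, R (e m) (e i) (e m) (e j)) *
          φ (Fin.cons (e i) (fun m => e (ks m))) *
          φ (Fin.cons (e j) (fun m => e (ks m))))
    - ((p : ℝ) + 2) * (((p : ℝ) + 2) - 1) *
      (∑ i, ∑ j, ∑ k, ∑ l, ∑ ks : Fin p → Fin n,
        R (e i) (e j) (e k) (e l) *
          φ (Fin.cons (e i) (Fin.cons (e k) (fun m => e (ks m)))) *
          φ (Fin.cons (e j) (Fin.cons (e l) (fun m => e (ks m)))))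

theorem Fin.sum_pi_succ_comp {α β M : Type*} [Fintype α] [AddCommMonoid M] {m : ℕ}
    (v : α → β) (f : (Fin (m + 1) → β) → M) :
    ∑ t : Fin (m + 1) → α, f (fun k => v (t k)) =
      ∑ i, ∑ ks : Fin m → α, f (Fin.cons (v i) (fun k => v (ks k))) := by
  rw [← (Fin.consEquiv fun _ => α).sum_comp, Fintype.sum_prod_type]
  refine Finset.sum_congr rfl fun i _ => Finset.sum_congr rfl fun ks _ => ?_
  congr 1
  exact Fin.comp_cons v i ks

section Slice

variable {R M N : Type*} [CommSemiring R] [AddCommMonoid M] [Module R M] [AddCommMonoid N]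
  [Module R N] {p : ℕ}

def MultilinearMap.bilinearSlice (φ : MultilinearMap R (fun _ : Fin (p + 2) => M) N)
    (w : Fin p → M) : M →ₗ[R] M →ₗ[R] N :=
  LinearMap.mk₂ R (fun X Y => φ (Fin.cons X (Fin.cons Y w)))
    (fun X X' Y => by simp only [← φ.curryLeft_apply, map_add, add_apply])
    (fun c X Y => by simp only [← φ.curryLeft_apply, map_smul, smul_apply])
    (fun X Y Y' => by
      simp only [← φ.curryLeft_apply, ← MultilinearMap.curryLeft_apply, map_add, add_apply])
    (fun c X Y => by
      simp only [← φ.curryLeft_apply, ← MultilinearMap.curryLeft_apply, map_smul, smul_apply])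

@[simp]
theorem MultilinearMap.bilinearSlice_apply (φ : MultilinearMap R (fun _ : Fin (p + 2) => M) N)
    (w : Fin p → M) (X Y : M) : φ.bilinearSlice w X Y = φ (Fin.cons X (Fin.cons Y w)) := rfl

theorem Fin.cons_cons_comp_swap {α : Type*} (x y : α) (w : Fin p → α) :
    (Fin.cons x (Fin.cons y w) : Fin (p + 2) → α) ∘ Equiv.swap 0 1 = Fin.cons y (Fin.cons x w) := by
  funext i
  refine Fin.cases ?_ (Fin.cases ?_ fun k => ?_) i
  · simp
  · simp
  · have h0 : (k.succ.succ : Fin (p + 2)) ≠ 0 := Fin.succ_ne_zero _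
    have h1 : (k.succ.succ : Fin (p + 2)) ≠ 1 := (Fin.succ_injective _).ne (Fin.succ_ne_zero k)
    simp [Equiv.swap_apply_of_ne_of_ne h0 h1]

theorem MultilinearMap.bilinearSlice_comm {φ : MultilinearMap R (fun _ : Fin (p + 2) => M) N}
    (hφ : ∀ σ : Equiv.Perm (Fin (p + 2)), ∀ v : Fin (p + 2) → M, φ (v ∘ σ) = φ v)
    (w : Fin p → M) (X Y : M) : φ.bilinearSlice w X Y = φ.bilinearSlice w Y X := by
  rw [bilinearSlice_apply, bilinearSlice_apply, ← Fin.cons_cons_comp_swap, hφ]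

end Slice

theorem MultilinearMap.eq_zero_of_sum_sq_basis_eq_zero {ι κ E : Type*} [Fintype ι]
    [DecidableEq ι] [Fintype κ] [AddCommGroup E] [Module ℝ E] (b : Module.Basis κ ℝ E)
    {φ : MultilinearMap ℝ (fun _ : ι => E) ℝ}
    (h : ∑ t : ι → κ, φ (fun i => b (t i)) ^ 2 = 0) : φ = 0 := by
  have hzero := (Finset.sum_eq_zero_iff_of_nonneg fun t _ => sq_nonneg (φ fun i => b (t i))).mp h
  refine Module.Basis.ext_multilinear (fun _ => b) fun t => ?_
  simpa using hzero t (Finset.mem_univ t)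

section Curvature

variable {E ι : Type*} [NormedAddCommGroup E] [InnerProductSpace ℝ E] [Fintype ι]
  (R : E →ₗ[ℝ] E →ₗ[ℝ] E →ₗ[ℝ] E →ₗ[ℝ] ℝ)

theorem sum_ricci_mul_mul_le {e : ι → E} (he : Orthonormal ℝ e) {c : ℝ}
    (hRic : ∀ X : E, (∑ m, R (e m) X (e m) X) ≤ c * ‖X‖ ^ 2) (a : ι → ℝ) :
    ∑ i, ∑ j, (∑ m, R (e m) (e i) (e m) (e j)) * a i * a j ≤ c * ∑ i, a i ^ 2 := by
  set X := ∑ i, a i • e i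
  have hX : ‖X‖ ^ 2 = ∑ i, a i ^ 2 := by
    rw [← real_inner_self_eq_norm_sq, he.inner_sum]
    simp [sq]
  have hRicX : ∑ m, R (e m) X (e m) X = ∑ i, ∑ j, (∑ m, R (e m) (e i) (e m) (e j)) * a i * a j := by
    simp only [X, map_sum, map_smul, LinearMap.sum_apply, LinearMap.smul_apply, smul_eq_mul,
      Finset.mul_sum, Finset.sum_mul]
    conv_rhs => rw [Finset.sum_comm_cycle]
    refine Finset.sum_congr rfl fun m _ => ?_
    rw [Finset.sum_comm]
    exact Finset.sum_congr rfl fun i _ => Finset.sum_congr rfl fun j _ => by ring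
  rw [← hRicX, ← hX]
  exact hRic X

theorem sum_curvature_mul_mul_eq_neg (e : ι → E)
    (hR : ∀ X Y Z W : E, R X Y Z W = - R Y X Z W) (ψ : E →ₗ[ℝ] E →ₗ[ℝ] ℝ) :
    ∑ i, ∑ j, ∑ k, ∑ l, R (e i) (e j) (e k) (e l) * ψ (e i) (e k) * ψ (e j) (e l) =
      -∑ i, ∑ j, ∑ k, ∑ l, R (e i) (e k) (e l) (e j) * ψ (e k) (e l) * ψ (e i) (e j) := by
  simp only [← Finset.sum_neg_distrib]
  rw [Finset.sum_comm]
  refine Finset.sum_congr rfl fun i _ => ?_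
  rw [Finset.sum_comm_cycle]
  refine Finset.sum_congr rfl fun j _ => Finset.sum_congr rfl fun k _ =>
    Finset.sum_congr rfl fun l _ => ?_
  rw [hR]
  ring

theorem sum_ricci_slices_le {e : ι → E} (he : Orthonormal ℝ e) {c : ℝ}
    (hRic : ∀ X : E, (∑ m, R (e m) X (e m) X) ≤ c * ‖X‖ ^ 2) {m : ℕ}
    (f : (Fin (m + 1) → E) → ℝ) :
    ∑ i, ∑ j, ∑ ks : Fin m → ι, (∑ k, R (e k) (e i) (e k) (e j)) *
        f (Fin.cons (e i) fun k => e (ks k)) * f (Fin.cons (e j) fun k => e (ks k)) ≤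
      c * ∑ t : Fin (m + 1) → ι, f (fun k => e (t k)) ^ 2 := by
  conv_rhs => rw [Fin.sum_pi_succ_comp e fun x => f x ^ 2, Finset.sum_comm, Finset.mul_sum]
  rw [Finset.sum_comm_cycle]
  exact Finset.sum_le_sum fun ks _ =>
    sum_ricci_mul_mul_le R he hRic fun i => f (Fin.cons (e i) fun k => e (ks k))

theorem mul_sum_sq_le_sum_curvature_slices {e : ι → E}
    (hR : ∀ X Y Z W : E, R X Y Z W = - R Y X Z W) {β : ℝ}
    (hQ : ∀ ψ : E →ₗ[ℝ] E →ₗ[ℝ] ℝ, (∀ X Y : E, ψ X Y = ψ Y X) →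
      (∑ i, ψ (e i) (e i)) = 0 →
      (∑ i, ∑ j, ∑ k, ∑ l, R (e i) (e k) (e l) (e j) * ψ (e k) (e l) * ψ (e i) (e j)) ≤
        -β * (∑ i, ∑ j, (ψ (e i) (e j)) ^ 2))
    {p : ℕ} {φ : MultilinearMap ℝ (fun _ : Fin (p + 2) => E) ℝ}
    (hφsymm : ∀ σ : Equiv.Perm (Fin (p + 2)), ∀ v : Fin (p + 2) → E, φ (v ∘ σ) = φ v)
    (hφtr : ∀ v : Fin p → E, (∑ i, φ (Fin.cons (e i) (Fin.cons (e i) v))) = 0) :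
    β * ∑ t : Fin (p + 2) → ι, φ (fun k => e (t k)) ^ 2 ≤
      ∑ i, ∑ j, ∑ k, ∑ l, ∑ ks : Fin p → ι, R (e i) (e j) (e k) (e l) *
        φ (Fin.cons (e i) (Fin.cons (e k) fun m => e (ks m))) *
        φ (Fin.cons (e j) (Fin.cons (e l) fun m => e (ks m))) := by
  have hsplit : ∑ t : Fin (p + 2) → ι, φ (fun k => e (t k)) ^ 2 =
      ∑ ks : Fin p → ι, ∑ i, ∑ j, φ (Fin.cons (e i) (Fin.cons (e j) fun m => e (ks m))) ^ 2 := by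
    rw [Fin.sum_pi_succ_comp e fun x => φ x ^ 2, ← Finset.sum_comm_cycle]
    exact Finset.sum_congr rfl fun i _ => Fin.sum_pi_succ_comp e fun x => φ (Fin.cons (e i) x) ^ 2
  simp_rw [Finset.sum_comm (γ := ι) (α := Fin p → ι)]
  rw [hsplit, Finset.mul_sum]
  refine Finset.sum_le_sum fun ks _ => ?_
  set ψ := φ.bilinearSlice fun m => e (ks m)
  have hQψ := hQ ψ (MultilinearMap.bilinearSlice_comm hφsymm _) (hφtr _)
  have hsign := sum_curvature_mul_mul_eq_neg R e hR ψ
  simp only [ψ, MultilinearMap.bilinearSlice_apply] at hQψ hsign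
  linarith

end Curvature

theorem stmt_14_general
    {E : Type*} [NormedAddCommGroup E] [InnerProductSpace ℝ E]
    {n : ℕ} (hn : 2 ≤ n) (e : OrthonormalBasis (Fin n) ℝ E)
    (R : E →ₗ[ℝ] E →ₗ[ℝ] E →ₗ[ℝ] E →ₗ[ℝ] ℝ)
    (hR1 : ∀ X Y Z W : E, R X Y Z W = - R Y X Z W)
    (β : ℝ) (hβ : 0 < β)
    (hQ : ∀ ψ : E →ₗ[ℝ] E →ₗ[ℝ] ℝ, (∀ X Y : E, ψ X Y = ψ Y X) →
      (∑ i, ψ (e i) (e i)) = 0 →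
      (∑ i, ∑ j, ∑ k, ∑ l, R (e i) (e k) (e l) (e j) * ψ (e k) (e l) * ψ (e i) (e j)) ≤
        -β * (∑ i, ∑ j, (ψ (e i) (e j)) ^ 2))
    (hRic : ∀ X : E, (∑ m, R (e m) X (e m) X) ≤ -(((n : ℝ) - 1) * β) * ‖X‖ ^ 2)
    (p : ℕ)
    (φ : MultilinearMap ℝ (fun _ : Fin (p + 2) => E) ℝ)
    (hφsymm : ∀ σ : Equiv.Perm (Fin (p + 2)), ∀ v : Fin (p + 2) → E, φ (v ∘ σ) = φ v)
    (hφtr : ∀ v : Fin p → E, (∑ i, φ (Fin.cons (e i) (Fin.cons (e i) v))) = 0) :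
    weitzenbockQ e R p φ ≤
      -(((p : ℝ) + 2) * ((n : ℝ) + ((p : ℝ) + 2) - 2) * β) *
        (∑ t : Fin (p + 2) → Fin n, (φ (fun m => e (t m))) ^ 2) ∧
    -(((p : ℝ) + 2) * ((n : ℝ) + ((p : ℝ) + 2) - 2) * β) *
        (∑ t : Fin (p + 2) → Fin n, (φ (fun m => e (t m))) ^ 2) ≤ 0 ∧
    (weitzenbockQ e R p φ = 0 → φ = 0) := by
  have hricci := sum_ricci_slices_le R e.orthonormal hRic fun v => φ v
  have hcurv := mul_sum_sq_le_sum_curvature_slices R hR1 hQ hφsymm hφtr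
  have hQp : weitzenbockQ e R p φ ≤
      -(((p : ℝ) + 2) * ((n : ℝ) + ((p : ℝ) + 2) - 2) * β) *
        ∑ t : Fin (p + 2) → Fin n, φ (fun m => e (t m)) ^ 2 := by
    unfold weitzenbockQ
    linear_combination ((p : ℝ) + 2) * hricci + ((p : ℝ) + 2) * ((p : ℝ) + 1) * hcurv
  have hN : 0 ≤ ∑ t : Fin (p + 2) → Fin n, φ (fun m => e (t m)) ^ 2 :=
    Finset.sum_nonneg fun _ _ => sq_nonneg _
  have hc : 0 < ((p : ℝ) + 2) * ((n : ℝ) + ((p : ℝ) + 2) - 2) * β := by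
    have hn' : (2 : ℝ) ≤ n := by exact_mod_cast hn
    have : (0 : ℝ) < (n : ℝ) + ((p : ℝ) + 2) - 2 := by linarith
    positivity
  refine ⟨hQp, by nlinarith, fun hzero => ?_⟩
  refine MultilinearMap.eq_zero_of_sum_sq_basis_eq_zero e.toBasis ?_
  simp only [OrthonormalBasis.coe_toBasis]
  nlinarith

/-- **inequality (3.1), algebraic form.** Let `β > 0`.  If
`Q̊(ψ) ≤ −β ‖ψ‖²` for every traceless symmetric bilinear form `ψ` and
`Ric(X,X) ≤ −(n−1) β ‖X‖²` for every `X`, then for every `p ≥ 2` (written `p + 2`)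
and every totally traceless symmetric `p`-multilinear map `φ`,
`Q_p(φ) ≤ −p(n+p−2) β ‖φ‖² ≤ 0`, and `Q_p(φ) = 0` only if `φ = 0`. -/
theorem stmt_14
    {E : Type*} [NormedAddCommGroup E] [InnerProductSpace ℝ E]
    {n : ℕ} (hn : 2 ≤ n) (e : OrthonormalBasis (Fin n) ℝ E)
    (R : E →ₗ[ℝ] E →ₗ[ℝ] E →ₗ[ℝ] E →ₗ[ℝ] ℝ)
    (hR1 : ∀ X Y Z W : E, R X Y Z W = - R Y X Z W)
    (hR2 : ∀ X Y Z W : E, R X Y Z W = - R X Y W Z)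
    (hR3 : ∀ X Y Z W : E, R X Y Z W = R Z W X Y)
    (hR4 : ∀ X Y Z W : E, R X Y Z W + R Y Z X W + R Z X Y W = 0)
    (β : ℝ) (hβ : 0 < β)
    (hQ : ∀ ψ : E →ₗ[ℝ] E →ₗ[ℝ] ℝ, (∀ X Y : E, ψ X Y = ψ Y X) →
      (∑ i, ψ (e i) (e i)) = 0 →
      (∑ i, ∑ j, ∑ k, ∑ l, R (e i) (e k) (e l) (e j) * ψ (e k) (e l) * ψ (e i) (e j)) ≤
        -β * (∑ i, ∑ j, (ψ (e i) (e j)) ^ 2))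
    (hRic : ∀ X : E, (∑ m, R (e m) X (e m) X) ≤ -(((n : ℝ) - 1) * β) * ‖X‖ ^ 2)
    (p : ℕ)
    (φ : MultilinearMap ℝ (fun _ : Fin (p + 2) => E) ℝ)
    (hφsymm : ∀ σ : Equiv.Perm (Fin (p + 2)), ∀ v : Fin (p + 2) → E, φ (v ∘ σ) = φ v)
    (hφtr : ∀ v : Fin p → E, (∑ i, φ (Fin.cons (e i) (Fin.cons (e i) v))) = 0) :
    weitzenbockQ e R p φ ≤
      -(((p : ℝ) + 2) * ((n : ℝ) + ((p : ℝ) + 2) - 2) * β) *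
        (∑ t : Fin (p + 2) → Fin n, (φ (fun m => e (t m))) ^ 2) ∧
    -(((p : ℝ) + 2) * ((n : ℝ) + ((p : ℝ) + 2) - 2) * β) *
        (∑ t : Fin (p + 2) → Fin n, (φ (fun m => e (t m))) ^ 2) ≤ 0 ∧
    (weitzenbockQ e R p φ = 0 → φ = 0) :=
  stmt_14_general hn e R hR1 β hβ hQ hRic p φ hφsymm hφtr
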